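/- In a quasicategory K, composition is associative up to homotopy: given edges f : w → x, g : x → y, h : y → z, an edge p that is a composite of f and g, an edge q that is a composite of g and h, an edge u that is a composite of p and h, and an edge v that is a composite of f and q, the edges u and v from w to z are homotopic. -/

import Mathlib

open CategoryTheory Simplicial

namespace SSet

/-- `f` is an edge of `S` from the vertex `x` to the vertex `y`: `d₁ f = x` and `d₀ f = y`. -/
def IsEdge (S : SSet) (x y : S _⦋0⦌) (f : S _⦋1⦌) : Prop :=
  S.δ 1 f = x ∧ S.δ 0 f = y

/-- Two edges `f, g` of `S` with target `y` are homotopic if there is a 2-simplex `σ` with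
`d₂ σ = f`, `d₀ σ` the degenerate edge at `y`, and `d₁ σ = g`. -/
def Homotopic (S : SSet) (y : S _⦋0⦌) (f g : S _⦋1⦌) : Prop :=
  ∃ τ : S _⦋2⦌, S.δ 2 τ = f ∧ S.δ 0 τ = S.σ 0 y ∧ S.δ 1 τ = g

/-- An edge `h` is a composite of edges `f` and `g` if there is a 2-simplex `σ` with
`d₂ σ = f`, `d₀ σ = g` and `d₁ σ = h`. -/
def IsComposite (S : SSet) (f g h : S _⦋1⦌) : Prop :=
  ∃ τ : S _⦋2⦌, S.δ 2 τ = f ∧ S.δ 0 τ = g ∧ S.δ 1 τ = h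

end SSet

/-!
Filling the inner horn `Λ[3, 2]` whose faces are the composition triangles of `q`, `u` and `p`
produces a 3-simplex whose face `d₂` exhibits `u` as a composite of `f` and `q`. So `u` and `v`
are both composites of `f` and `q`, and filling `Λ[3, 1]` with faces `s₁ q`, the triangle of `v`
and that of `u` gives a 3-simplex whose face `d₁` is a homotopy from `u` to `v`.
-/

namespace SSet

variable {S : SSet}

theorem Quasicategory.exists_simplex_of_faces [Quasicategory S] {n : ℕ} {i : Fin (n + 3)}
    (h0 : 0 < i) (hn : i < Fin.last (n + 2)) (F : Fin (n + 3) → S _⦋n + 1⦌)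
    (hF : ∀ j k (_ : j ≠ i) (_ : k ≠ i) (hjk : j < k),
      S.δ (k.pred (Fin.ne_zero_of_lt hjk)) (F j) = S.δ (j.castPred (Fin.ne_last_of_lt hjk)) (F k)) :
    ∃ τ : S _⦋n + 2⦌, ∀ j, j ≠ i → S.δ j τ = F j := by
  have hc : horn.IsCompatible (i := i) (fun j _ ↦ yonedaEquiv.symm (F j)) := by
    rw [horn.isCompatible_iff]
    intro j k hj hk hjk
    simp only [stdSimplex.δ_comp_yonedaEquiv_symm, hF j k hj hk hjk]
  obtain ⟨φ, hφ⟩ := hc.exists_desc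
  obtain ⟨τ, rfl⟩ := Quasicategory.hornFilling h0 hn φ
  refine ⟨yonedaEquiv τ, fun j hj ↦ ?_⟩
  rw [← stdSimplex.yonedaEquiv_δ_comp, ← horn.ι_ι i j hj, Category.assoc, hφ j hj,
    Equiv.apply_symm_apply]

theorem Quasicategory.exists_fill_horn₃₁ [Quasicategory S] {σ₀ σ₂ σ₃ : S _⦋2⦌}
    (h₀₂ : S.δ 1 σ₀ = S.δ 0 σ₂) (h₀₃ : S.δ 2 σ₀ = S.δ 0 σ₃) (h₂₃ : S.δ 2 σ₂ = S.δ 2 σ₃) :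
    ∃ τ : S _⦋3⦌, S.δ 0 τ = σ₀ ∧ S.δ 2 τ = σ₂ ∧ S.δ 3 τ = σ₃ := by
  obtain ⟨τ, hτ⟩ := exists_simplex_of_faces (n := 1) (i := 1) (by decide) (by decide)
    ![σ₀, σ₀, σ₂, σ₃] (by
      intro j k hj hk hjk
      fin_cases j <;> fin_cases k <;>
        first
        | exact absurd hjk (by decide)
        | exact absurd rfl hj
        | exact absurd rfl hk
        | assumption)
  exact ⟨τ, hτ 0 (by decide), hτ 2 (by decide), hτ 3 (by decide)⟩

theorem Quasicategory.exists_fill_horn₃₂ [Quasicategory S] {σ₀ σ₁ σ₃ : S _⦋2⦌}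
    (h₀₁ : S.δ 0 σ₀ = S.δ 0 σ₁) (h₀₃ : S.δ 2 σ₀ = S.δ 0 σ₃) (h₁₃ : S.δ 2 σ₁ = S.δ 1 σ₃) :
    ∃ τ : S _⦋3⦌, S.δ 0 τ = σ₀ ∧ S.δ 1 τ = σ₁ ∧ S.δ 3 τ = σ₃ := by
  obtain ⟨τ, hτ⟩ := exists_simplex_of_faces (n := 1) (i := 2) (by decide) (by decide)
    ![σ₀, σ₁, σ₀, σ₃] (by
      intro j k hj hk hjk
      fin_cases j <;> fin_cases k <;>
        first
        | exact absurd hjk (by decide)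
        | exact absurd rfl hj
        | exact absurd rfl hk
        | assumption)
  exact ⟨τ, hτ 0 (by decide), hτ 1 (by decide), hτ 3 (by decide)⟩

theorem IsComposite.δ_zero_eq {f g h : S _⦋1⦌} (hc : S.IsComposite f g h) :
    S.δ 0 h = S.δ 0 g := by
  obtain ⟨σ, -, rfl, rfl⟩ := hc
  exact (S.δ_comp_δ_self_apply σ).symm

theorem IsComposite.assoc [Quasicategory S] {f g h p q u : S _⦋1⦌} (hp : S.IsComposite f g p)
    (hq : S.IsComposite g h q) (hu : S.IsComposite p h u) : S.IsComposite f q u := by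
  obtain ⟨σp, hp₂, hp₀, hp₁⟩ := hp
  obtain ⟨σq, hq₂, hq₀, hq₁⟩ := hq
  obtain ⟨σu, hu₂, hu₀, hu₁⟩ := hu
  obtain ⟨τ, hτ₀, hτ₁, hτ₃⟩ := Quasicategory.exists_fill_horn₃₂ (σ₀ := σq) (σ₁ := σu)
    (σ₃ := σp) (by rw [hq₀, hu₀]) (by rw [hq₂, hp₀]) (by rw [hu₂, hp₁])
  refine ⟨S.δ 2 τ, ?_, ?_, ?_⟩
  · calc S.δ 2 (S.δ 2 τ) = S.δ 2 (S.δ 3 τ) := S.δ_comp_δ_self_apply τ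
      _ = f := by rw [hτ₃, hp₂]
  · calc S.δ 0 (S.δ 2 τ) = S.δ 1 (S.δ 0 τ) := S.δ_comp_δ_apply (i := 0) (j := 1) (by decide) τ
      _ = q := by rw [hτ₀, hq₁]
  · calc S.δ 1 (S.δ 2 τ) = S.δ 1 (S.δ 1 τ) := (S.δ_comp_δ_self_apply τ).symm
      _ = u := by rw [hτ₁, hu₁]

theorem IsComposite.homotopic [Quasicategory S] {f q u v : S _⦋1⦌} {z : S _⦋0⦌}
    (hu : S.IsComposite f q u) (hv : S.IsComposite f q v) (hz : S.δ 0 q = z) :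
    S.Homotopic z u v := by
  obtain ⟨σu, hu₂, hu₀, hu₁⟩ := hu
  obtain ⟨σv, hv₂, hv₀, hv₁⟩ := hv
  obtain ⟨τ, hτ₀, hτ₂, hτ₃⟩ := Quasicategory.exists_fill_horn₃₁ (σ₀ := S.σ 1 q) (σ₂ := σv)
    (σ₃ := σu) ((S.δ_comp_σ_self_apply 1 q).trans hv₀.symm)
    ((S.δ_comp_σ_succ_apply 1 q).trans hu₀.symm) (by rw [hv₂, hu₂])
  refine ⟨S.δ 1 τ, ?_, ?_, ?_⟩
  · calc S.δ 2 (S.δ 1 τ) = S.δ 1 (S.δ 3 τ) :=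
          (S.δ_comp_δ_apply (i := 1) (j := 2) (by decide) τ).symm
      _ = u := by rw [hτ₃, hu₁]
  · calc S.δ 0 (S.δ 1 τ) = S.δ 0 (S.δ 0 τ) := (S.δ_comp_δ_self_apply τ).symm
      _ = S.δ 0 (S.σ 1 q) := by rw [hτ₀]
      _ = S.σ 0 z := by rw [← hz]; exact S.δ_comp_σ_of_le_apply (i := 0) (j := 0) le_rfl q
  · calc S.δ 1 (S.δ 1 τ) = S.δ 1 (S.δ 2 τ) := S.δ_comp_δ_self_apply τ
      _ = v := by rw [hτ₂, hv₁]

end SSet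

open SSet in
theorem composition_associative_up_to_homotopy_general (S : SSet) [Quasicategory S]
    (y z : S _⦋0⦌) (f g h p q u v : S _⦋1⦌)
    (hh : S.IsEdge y z h)
    (hp : S.IsComposite f g p) (hq : S.IsComposite g h q)
    (hu : S.IsComposite p h u) (hv : S.IsComposite f q v) :
    S.Homotopic z u v :=
  (hp.assoc hq hu).homotopic hv (hq.δ_zero_eq.trans hh.2)

open SSet in
/-- In a quasicategory `S`, composition is associative up to homotopy: given edges
`f : w → x`, `g : x → y`, `h : y → z`, a composite `p` of `f` and `g`, a composite `q` of
`g` and `h`, a composite `u` of `p` and `h`, and a composite `v` of `f` and `q`, the edges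
`u` and `v` from `w` to `z` are homotopic. -/
theorem composition_associative_up_to_homotopy (S : SSet) [Quasicategory S]
    (w x y z : S _⦋0⦌) (f g h p q u v : S _⦋1⦌)
    (hf : S.IsEdge w x f) (hg : S.IsEdge x y g) (hh : S.IsEdge y z h)
    (hp : S.IsComposite f g p) (hq : S.IsComposite g h q)
    (hu : S.IsComposite p h u) (hv : S.IsComposite f q v) :
    S.Homotopic z u v :=
  composition_associative_up_to_homotopy_general S y z f g h p q u v hh hp hq hu hv
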